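/- arXiv:1605.09772 — 2 statements merged into one kernel-verified Lean document; each statement's English description precedes it below -/
import Mathlib

section
/- Let E = (S, A_E, →_E, s₀) and M = (T, A_M, →_M, t₀) be LTSs. Every finite trace ℓ₀,…,ℓ_{n−1} of the parallel composition E‖M is an abstracting path of length n of the abstracting composition of E and M: there exist witness states x₀,…,x_n ∈ S ⊎ T satisfying the abstracting-path conditions for the same label sequence, with no label equal to τ (in particular one may take x_i = inl s_i, where ⟨s_i,t_i⟩ are the states of the trace). -/
/-- A Labeled Transition System over state type `σ` and label type `Λ`:
an alphabet (set of labels), a transition relation contained in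
`S × A × S`, and an initial state. -/
structure LTS (σ Λ : Type*) where
  alphabet : Set Λ
  trans : σ → Λ → σ → Prop
  init : σ
  trans_mem : ∀ {s a s'}, trans s a s' → a ∈ alphabet

variable {S T Λ : Type*}

/-- Transition relation of the parallel composition `E ‖ M`. -/
def ParTrans (E : LTS S Λ) (M : LTS T Λ) (p : S × T) (a : Λ) (p' : S × T) : Prop :=
  (a ∈ E.alphabet \ M.alphabet ∧ E.trans p.1 a p'.1 ∧ p'.2 = p.2) ∨
  (a ∈ M.alphabet \ E.alphabet ∧ M.trans p.2 a p'.2 ∧ p'.1 = p.1) ∨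
  (a ∈ E.alphabet ∩ M.alphabet ∧ E.trans p.1 a p'.1 ∧ M.trans p.2 a p'.2)

/-- Label `a` is relaxed-enabled from `q ⊆ S ⊎ T` with outcome `x'`. -/
def RelaxedEnabled (E : LTS S Λ) (M : LTS T Λ) (q : Set (S ⊕ T)) (a : Λ)
    (x' : S ⊕ T) : Prop :=
  (a ∈ E.alphabet \ M.alphabet ∧
    ∃ s s', Sum.inl s ∈ q ∧ E.trans s a s' ∧ x' = Sum.inl s') ∨
  (a ∈ M.alphabet \ E.alphabet ∧
    ∃ t t', Sum.inr t ∈ q ∧ M.trans t a t' ∧ x' = Sum.inr t') ∨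
  (a ∈ E.alphabet ∩ M.alphabet ∧
    ∃ s s' t t', Sum.inl s ∈ q ∧ Sum.inr t ∈ q ∧ E.trans s a s' ∧ M.trans t a t' ∧
      (x' = Sum.inl s' ∨ x' = Sum.inr t'))

/-- The abstracting-composition step function `F`. -/
def Fstep (E : LTS S Λ) (M : LTS T Λ) (q : Set (S ⊕ T)) : Set (S ⊕ T) :=
  q ∪ {x' | ∃ a, RelaxedEnabled E M q a x'}

/-- The abstraction sequence `q_k = F^[k] {inl s₀, inr t₀}`. -/
def absSeq (E : LTS S Λ) (M : LTS T Λ) (k : ℕ) : Set (S ⊕ T) :=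
  (Fstep E M)^[k] {Sum.inl E.init, Sum.inr M.init}

/-- `ℓ 0, …, ℓ (n-1)` is a finite trace of length `n` of `E ‖ M`. -/
def IsTrace (E : LTS S Λ) (M : LTS T Λ) (n : ℕ) (ℓ : ℕ → Λ) : Prop :=
  ∃ r : ℕ → S × T, r 0 = (E.init, M.init) ∧
    ∀ i < n, ParTrans E M (r i) (ℓ i) (r (i + 1))

/-- `ℓ 0, …, ℓ (n-1)` with witness states `x 0, …, x n` is an
abstracting path of length `n` of the abstracting composition of `E` and `M`,
where `τ` is the special delay label. -/
def IsAbsPath (E : LTS S Λ) (M : LTS T Λ) (τ : Λ) (n : ℕ) (ℓ : ℕ → Λ)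
    (x : ℕ → S ⊕ T) : Prop :=
  (∀ i < n, ℓ i ∈ E.alphabet ∪ M.alphabet ∪ {τ}) ∧
  (∀ i ≤ n, x i ∈ absSeq E M i) ∧
  (∀ i < n,
    (ℓ i = τ ∧ x (i + 1) = x i) ∨
    ((∃ y, RelaxedEnabled E M (absSeq E M i) (ℓ i) y) ∧
      ∃ u v u' v', ParTrans E M (u, v) (ℓ i) (u', v') ∧
        (x i = Sum.inl u ∨ x i = Sum.inr v) ∧
        (x (i + 1) = Sum.inl u' ∨ x (i + 1) = Sum.inr v')))

/-- `p` is reachable from the initial state of `E ‖ M` by a path of length at most `k`. -/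
def ReachableWithin (E : LTS S Λ) (M : LTS T Λ) (k : ℕ) (p : S × T) : Prop :=
  ∃ m ≤ k, ∃ r : ℕ → S × T, ∃ ℓ : ℕ → Λ,
    r 0 = (E.init, M.init) ∧ r m = p ∧
    ∀ i < m, ParTrans E M (r i) (ℓ i) (r (i + 1))

lemma mem_absSeq (E : LTS S Λ) (M : LTS T Λ) (n : ℕ) (ℓ : ℕ → Λ) (r : ℕ → S × T)
    (hr0 : r 0 = (E.init, M.init))
    (hstep : ∀ i < n, ParTrans E M (r i) (ℓ i) (r (i + 1))) :
    ∀ i ≤ n, Sum.inl (r i).1 ∈ absSeq E M i ∧ Sum.inr (r i).2 ∈ absSeq E M i := by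
  intro i
  induction i with
  | zero =>
    intro _
    simp [absSeq, hr0, Set.mem_insert_iff]
  | succ i ih =>
    intro hi
    have hin : i < n := Nat.lt_of_succ_le hi
    obtain ⟨h1, h2⟩ := ih (Nat.le_of_lt hin)
    have hq : absSeq E M (i + 1) = Fstep E M (absSeq E M i) := by
      simp [absSeq, Function.iterate_succ_apply']
    rw [hq]
    rcases hstep i hin with ⟨ha, ht, he⟩ | ⟨ha, ht, he⟩ | ⟨ha, htE, htM⟩
    · constructor
      · exact Or.inr ⟨ℓ i, Or.inl ⟨ha, _, _, h1, ht, rfl⟩⟩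
      · rw [he]; exact Or.inl h2
    · constructor
      · rw [he]; exact Or.inl h1
      · exact Or.inr ⟨ℓ i, Or.inr (Or.inl ⟨ha, _, _, h2, ht, rfl⟩)⟩
    · constructor
      · exact Or.inr ⟨ℓ i, Or.inr (Or.inr ⟨ha, _, _, _, _, h1, h2, htE, htM, Or.inl rfl⟩)⟩
      · exact Or.inr ⟨ℓ i, Or.inr (Or.inr ⟨ha, _, _, _, _, h1, h2, htE, htM, Or.inr rfl⟩)⟩

/-- Every finite trace of `E ‖ M` is an abstracting path of the abstracting
composition of `E` and `M` with the same labels, none of which is `τ`;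
one may take `x i = inl s i` as witness states. -/
theorem trace_isAbsPath (E : LTS S Λ) (M : LTS T Λ) (τ : Λ)
    (hτ : τ ∉ E.alphabet ∪ M.alphabet) (n : ℕ) (ℓ : ℕ → Λ) (r : ℕ → S × T)
    (hr0 : r 0 = (E.init, M.init))
    (hstep : ∀ i < n, ParTrans E M (r i) (ℓ i) (r (i + 1))) :
    (∀ i < n, ℓ i ≠ τ) ∧ IsAbsPath E M τ n ℓ (fun i => Sum.inl (r i).1) := by
  have hmem := mem_absSeq E M n ℓ r hr0 hstep
  have hlab : ∀ i < n, ℓ i ∈ E.alphabet ∪ M.alphabet := by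
    intro i hi
    rcases hstep i hi with ⟨ha, _, _⟩ | ⟨ha, _, _⟩ | ⟨ha, _, _⟩
    · exact Or.inl ha.1
    · exact Or.inr ha.1
    · exact Or.inl ha.1
  have hne : ∀ i < n, ℓ i ≠ τ := by
    intro i hi h
    exact hτ (h ▸ hlab i hi)
  refine ⟨hne, ?_, fun i hi => (hmem i hi).1, ?_⟩
  · intro i hi
    exact Or.inl (hlab i hi)
  · intro i hi
    refine Or.inr ⟨?_, (r i).1, (r i).2, (r (i+1)).1, (r (i+1)).2, hstep i hi, Or.inl rfl, Or.inl rfl⟩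
    obtain ⟨h1, h2⟩ := hmem i (Nat.le_of_lt hi)
    rcases hstep i hi with ⟨ha, ht, _⟩ | ⟨ha, ht, _⟩ | ⟨ha, htE, htM⟩
    · exact ⟨_, Or.inl ⟨ha, _, _, h1, ht, rfl⟩⟩
    · exact ⟨_, Or.inr (Or.inl ⟨ha, _, _, h2, ht, rfl⟩)⟩
    · exact ⟨_, Or.inr (Or.inr ⟨ha, _, _, _, _, h1, h2, htE, htM, Or.inl rfl⟩)⟩
end

section
/- Let E = (S, A_E, →_E, s₀) and M = (T, A_M, →_M, t₀) be LTSs. If a state ⟨s,t⟩ of the parallel composition E‖M is reachable from the initial state ⟨s₀,t₀⟩ by a path of length at most k, then inl s ∈ q_k and inr t ∈ q_k, where (q_k) is the abstraction sequence of the abstracting composition of E and M. -/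
variable {S T Λ : Type*}

lemma subset_Fstep (E : LTS S Λ) (M : LTS T Λ) (q : Set (S ⊕ T)) :
    q ⊆ Fstep E M q := Set.subset_union_left

lemma absSeq_succ (E : LTS S Λ) (M : LTS T Λ) (i : ℕ) :
    absSeq E M (i + 1) = Fstep E M (absSeq E M i) := by
  simp [absSeq, Function.iterate_succ_apply']

lemma absSeq_mono (E : LTS S Λ) (M : LTS T Λ) {i j : ℕ} (h : i ≤ j) :
    absSeq E M i ⊆ absSeq E M j := by
  induction j with
  | zero => simp [Nat.le_zero.mp h]
  | succ j ih =>
    rcases Nat.lt_or_ge i (j+1) with h' | h'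
    · exact (ih (Nat.lt_succ_iff.mp h')).trans
        (by rw [absSeq_succ]; exact subset_Fstep E M _)
    · have : i = j + 1 := le_antisymm h h'
      subst this; exact subset_refl _

lemma step_mem (E : LTS S Λ) (M : LTS T Λ) (q : Set (S ⊕ T))
    {u : S} {v : T} {a : Λ} {u' : S} {v' : T}
    (hu : Sum.inl u ∈ q) (hv : Sum.inr v ∈ q)
    (ht : ParTrans E M (u, v) a (u', v')) :
    Sum.inl u' ∈ Fstep E M q ∧ Sum.inr v' ∈ Fstep E M q := by
  rcases ht with ⟨ha, he, hv'⟩ | ⟨ha, hm, hu'⟩ | ⟨ha, he, hm⟩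
  · simp only at he hv'
    constructor
    · exact Or.inr ⟨a, Or.inl ⟨ha, u, u', hu, he, rfl⟩⟩
    · rw [hv']; exact subset_Fstep E M q hv
  · simp only at hm hu'
    constructor
    · rw [hu']; exact subset_Fstep E M q hu
    · exact Or.inr ⟨a, Or.inr (Or.inl ⟨ha, v, v', hv, hm, rfl⟩)⟩
  · simp only at he hm
    constructor
    · exact Or.inr ⟨a, Or.inr (Or.inr ⟨ha, u, u', v, v', hu, hv, he, hm, Or.inl rfl⟩)⟩
    · exact Or.inr ⟨a, Or.inr (Or.inr ⟨ha, u, u', v, v', hu, hv, he, hm, Or.inr rfl⟩)⟩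

/-- If `⟨s, t⟩` is reachable in `E ‖ M` by a path of length at most `k`,
then both `inl s` and `inr t` belong to the `k`-th set of the abstraction
sequence of the abstracting composition. -/
theorem reachable_mem_absSeq (E : LTS S Λ) (M : LTS T Λ) (k : ℕ) (s : S) (t : T)
    (h : ReachableWithin E M k (s, t)) :
    Sum.inl s ∈ absSeq E M k ∧ Sum.inr t ∈ absSeq E M k := by
  obtain ⟨m, hm, r, ℓ, h0, hend, hstep⟩ := h
  have key : ∀ i ≤ m, Sum.inl (r i).1 ∈ absSeq E M i ∧ Sum.inr (r i).2 ∈ absSeq E M i := by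
    intro i hi
    induction i with
    | zero => simp [h0, absSeq]
    | succ i ih =>
      have hi' : i < m := Nat.lt_of_succ_le hi
      obtain ⟨hu, hv⟩ := ih hi'.le
      have ht := hstep i hi'
      rw [absSeq_succ]
      exact step_mem E M _ hu hv (by simpa using ht)
  obtain ⟨hu, hv⟩ := key m le_rfl
  rw [hend] at hu hv
  exact ⟨absSeq_mono E M hm hu, absSeq_mono E M hm hv⟩
end
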